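/- arXiv:2503.04086 — 8 statements merged into one kernel-verified Lean document; each statement's English description precedes it below -/
import Mathlib

section
/- Let R be an Artinian (or finite) commutative ring and a, b ∈ R. If the principal ideals Ra and Rb are equal, then there exists a unit u ∈ R× such that b = u·a. -/
/-- Kaplansky's lemma: in a commutative Artinian ring, if `a` and `b` generate the
same principal ideal, then `b = u * a` for some unit `u`. -/
theorem stmt_0 {R : Type*} [CommRing R] [IsArtinianRing R] (a b : R)
    (h : Ideal.span ({a} : Set R) = Ideal.span ({b} : Set R)) :
    ∃ u : Rˣ, b = (u : R) * a := by
  -- get t, s with b = t * a and a = s * b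
  have hb : b ∈ Ideal.span ({a} : Set R) := by
    rw [h]; exact Ideal.subset_span rfl
  have ha : a ∈ Ideal.span ({b} : Set R) := by
    rw [← h]; exact Ideal.subset_span rfl
  obtain ⟨t, ht⟩ := Ideal.mem_span_singleton'.mp hb
  obtain ⟨s, hs⟩ := Ideal.mem_span_singleton'.mp ha
  set x := s * t with hx
  have hxa : x * a = a := by rw [hx, mul_assoc, ht, hs]
  -- stabilization: ∃ N ≥ 1, y with x^(2N) * y = x^N
  obtain ⟨n, hn⟩ := IsArtinian.range_smul_pow_stabilizes R x
  set N := max n 1 with hNdef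
  have hN1 : 1 ≤ N := le_max_right _ _
  have hmem : x ^ N ∈ LinearMap.range (x ^ (2 * N) • LinearMap.id : R →ₗ[R] R) := by
    rw [← hn (2 * N) (by omega), hn N (le_max_left _ _)]
    exact ⟨1, by simp⟩
  obtain ⟨y, hy⟩ := hmem
  have hy' : x ^ (2 * N) * y = x ^ N := by
    simpa [mul_comm] using hy
  -- e is idempotent and e * a = a
  set e := x ^ N * y with he
  have hee : e * e = e := by
    have h2 : x ^ N * y * (x ^ N * y) = x ^ (2 * N) * y * y := by
      rw [two_mul, pow_add]; ring
    rw [he, h2, hy']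
  have hxNa : ∀ k : ℕ, x ^ k * a = a := by
    intro k
    induction k with
    | zero => simp
    | succ m ihm => rw [pow_succ, mul_assoc, hxa, ihm]
  have hea : e * a = a :=
    calc e * a = x ^ N * y * (x ^ N * a) := by rw [hxNa]
    _ = x ^ (2 * N) * y * a := by rw [two_mul, pow_add]; ring
    _ = x ^ N * a := by rw [hy']
    _ = a := hxNa N
  -- construct the unit
  obtain ⟨k, hk⟩ : ∃ k, N = 1 + k := ⟨N - 1, by omega⟩
  have heN : e = x ^ (1 + k) * y := by rw [he, hk]
  have huv : (t * e + 1 - e) * (s * x ^ k * y * e + 1 - e) = 1 := by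
    linear_combination (s * t * x ^ k * y - t - s * x ^ k * y + 2) * hee
      - e * heN - x ^ k * y * e * hx
  have hvu : (s * x ^ k * y * e + 1 - e) * (t * e + 1 - e) = 1 := by
    rw [mul_comm]; exact huv
  refine ⟨⟨t * e + 1 - e, s * x ^ k * y * e + 1 - e, huv, hvu⟩, ?_⟩
  show b = (t * e + 1 - e) * a
  linear_combination (1 - t) * hea - ht
end

section
/- Let R be a finite commutative ring such that the unitary Cayley graph G_R = Γ(R, R×) is connected, and let I₁,…,I_k be nonzero principal ideals of R with associated gcd-graph G_R(D) (connection set S = {s : Rs = I_i for some i}). Then G_R(D) is connected if and only if I₁ + I₂ + ⋯ + I_k = R. -/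
/-- The gcd-graph of a finite commutative ring on which the unitary Cayley graph. -/
def gcdGraph (R : Type*) [CommRing R] (D : Finset (Ideal R)) : SimpleGraph R :=
  SimpleGraph.fromRel (fun x y => Ideal.span ({x - y} : Set R) ∈ D)

section aux
variable {R : Type*} [CommRing R]

/-- Along any walk in a difference-Cayley graph, the difference of endpoints lies in any
additive subgroup containing the connection set. -/
lemma reach_sub_mem (P : R → Prop) (A : AddSubgroup R) (hP : ∀ s, P s → s ∈ A)
    {x y : R} (h : (SimpleGraph.fromRel fun a b => P (a - b)).Reachable x y) :
    x - y ∈ A := by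
  obtain ⟨p⟩ := h
  induction p with
  | nil => simpa using A.zero_mem
  | @cons u v w h p ih =>
    rw [SimpleGraph.fromRel_adj] at h
    have h1 : u - v ∈ A := by
      rcases h.2 with h2 | h2
      · exact hP _ h2
      · simpa using A.neg_mem (hP _ h2)
    simpa using A.add_mem h1 ih

lemma adj_translate (P : R → Prop) (c : R) {x y : R}
    (h : (SimpleGraph.fromRel fun a b => P (a - b)).Adj x y) :
    (SimpleGraph.fromRel fun a b => P (a - b)).Adj (x + c) (y + c) := by
  rw [SimpleGraph.fromRel_adj] at h ⊢
  simpa [add_sub_add_right_eq_sub] using h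

lemma reach_translate (P : R → Prop) (c : R) {x y : R}
    (h : (SimpleGraph.fromRel fun a b => P (a - b)).Reachable x y) :
    (SimpleGraph.fromRel fun a b => P (a - b)).Reachable (x + c) (y + c) := by
  exact h.map ⟨fun z => z + c, fun hab => adj_translate P c hab⟩

/-- The set of vertices reachable from `0` in a difference-Cayley graph is an additive
subgroup. -/
def reachSubgroup (P : R → Prop) : AddSubgroup R where
  carrier := {x | (SimpleGraph.fromRel fun a b => P (a - b)).Reachable 0 x}
  zero_mem' := SimpleGraph.Reachable.refl 0
  add_mem' := by
    intro a b ha hb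
    have h2 := reach_translate P a hb
    rw [zero_add] at h2
    exact ha.trans (by simpa [add_comm] using h2)
  neg_mem' := by
    intro a ha
    have := reach_translate P (-a) ha
    simpa using this.symm

end aux

/-- If the unitary Cayley graph of a finite commutative ring `R` is connected, then the
gcd-graph `G_R(D)` is connected iff the ideals in `D` sum to `R`. -/
theorem stmt_5 {R : Type*} [CommRing R] [Finite R]
    (hG : (SimpleGraph.fromRel (fun x y : R => IsUnit (x - y))).Connected)
    (D : Finset (Ideal R)) (hD : ∀ I ∈ D, I ≠ ⊥ ∧ I.IsPrincipal) :
    (gcdGraph R D).Connected ↔ (∑ I ∈ D, I) = ⊤ := by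
  set P : R → Prop := fun s => Ideal.span ({s} : Set R) ∈ D with hPdef
  have hgraph : gcdGraph R D = SimpleGraph.fromRel fun a b : R => P (a - b) := rfl
  constructor
  · intro hc
    -- 1 lies in the sum of the ideals
    have h1 : (1 : R) ∈ ∑ I ∈ D, I := by
      have hr : (gcdGraph R D).Reachable 0 1 := hc.preconnected 0 1
      rw [hgraph] at hr
      have hsub : ∀ s : R, P s → s ∈ (∑ I ∈ D, I).toAddSubgroup := by
        intro s hs
        have h1 : s ∈ Ideal.span ({s} : Set R) := Ideal.mem_span_singleton_self s
        have h2 : Ideal.span ({s} : Set R) ≤ ∑ I ∈ D, I :=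
          Finset.single_le_sum (f := fun I : Ideal R => I) (fun i _ => bot_le) hs
        exact h2 h1
      have := reach_sub_mem P ((∑ I ∈ D, I).toAddSubgroup) hsub hr
      simpa using (∑ I ∈ D, I).toAddSubgroup.neg_mem this
    exact Ideal.eq_top_iff_one _ |>.mpr h1
  · intro hsum
    -- every element of every I ∈ D is reachable from 0
    have hunits : ∀ r : R, r ∈ AddSubgroup.closure {u : R | IsUnit u} := by
      intro r
      have hr : (SimpleGraph.fromRel fun a b : R => IsUnit (a - b)).Reachable 0 r :=
        hG.preconnected 0 r
      have := reach_sub_mem (fun s => IsUnit s) (AddSubgroup.closure {u : R | IsUnit u})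
        (fun s hs => AddSubgroup.subset_closure hs) hr
      simpa using (AddSubgroup.closure {u : R | IsUnit u}).neg_mem this
    set H : AddSubgroup R := reachSubgroup P with hH
    -- connection set elements are in H
    have hS : ∀ s : R, P s → s ∈ H := by
      intro s hs
      have hsne : s ≠ 0 := by
        rintro rfl
        have := (hD _ hs).1
        simp [Ideal.span_singleton_eq_bot] at this
      refine SimpleGraph.Adj.reachable ?_
      rw [SimpleGraph.fromRel_adj]
      exact ⟨Ne.symm hsne, Or.inr (by simpa using hs)⟩
    -- for each I ∈ D, I ⊆ H
    have hI : ∀ I ∈ D, ∀ x ∈ I, x ∈ H := by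
      intro I hID x hx
      obtain ⟨g, rfl⟩ := (hD I hID).2
      rw [Ideal.submodule_span_eq] at hx hID
      obtain ⟨r, rfl⟩ := Ideal.mem_span_singleton'.mp hx
      -- K = preimage of H under multiplication by g
      have key : ∀ u : R, IsUnit u → u * g ∈ H := by
        intro u hu
        refine hS _ ?_
        show Ideal.span ({u * g} : Set R) ∈ D
        rwa [Ideal.span_singleton_mul_left_unit hu]
      have : r ∈ H.comap (AddMonoidHom.mulRight g) :=
        AddSubgroup.closure_le (H.comap (AddMonoidHom.mulRight g)) |>.mpr
          (fun u hu => key u hu) (hunits r)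
      simpa using this
    -- sum of ideals ⊆ H
    have hsub : ∀ (s : Finset (Ideal R)), (∀ I ∈ s, ∀ x ∈ I, x ∈ H) →
        ∀ x ∈ ∑ I ∈ s, I, x ∈ H := by
      classical
      intro s
      induction s using Finset.induction_on with
      | empty => intro _ x hx; simp at hx; simpa [hx] using H.zero_mem
      | @insert I s hIs ih =>
        intro hmem x hx
        rw [Finset.sum_insert hIs, Submodule.add_eq_sup] at hx
        obtain ⟨y, hy, z, hz, rfl⟩ := Submodule.mem_sup.mp hx
        exact H.add_mem (hmem I (Finset.mem_insert_self I s) y hy)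
          (ih (fun J hJ => hmem J (Finset.mem_insert_of_mem hJ)) z hz)
    have hall : ∀ x : R, x ∈ H := by
      intro x
      exact hsub D hI x (hsum ▸ Submodule.mem_top)
    constructor
    rw [hgraph]
    intro x y
    have hx := hall (y - x)
    have := reach_translate P x hx
    simpa using this
end

section
/- Let R be a finite commutative ring such that Γ(R, R×) is connected, and let D = {I₁,…,I_k} be nonzero principal ideals with I₁ + ⋯ + I_k = R. Then the diameter of the gcd-graph G_R(D) is at most 3k. -/
/-!
Connectedness of `Γ(R, Rˣ)` means that every element of `R` is a sum of units. If `x` is a sum of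
an even number of units, then in every residue field `R ⧸ m` there is a nonzero `a ≠ x`: this is
automatic unless `R ⧸ m = 𝔽₂`, and there `x ≡ 0` by parity. The Chinese remainder theorem over the
finitely many maximal ideals lifts these residues to a unit `u` with `x - u` a unit. Adding the unit
`1` handles odd sums, so `Γ(R, Rˣ)` has diameter at most `3`.

If `g` generates an ideal of `D`, then `x ↦ a + x * g` maps `Γ(R, Rˣ)` into `G_R(D)`, so `a` and
`a + r * g` are at distance at most `3`. Since the ideals of `D` sum to `R`, any difference `b - a` is
a sum of one multiple of each of the `k` generators, giving distance at most `3k`.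
-/

open SimpleGraph

theorem SimpleGraph.Hom.edist_le {V W : Type*} {G : SimpleGraph V} {G' : SimpleGraph W}
    (f : G →g G') (u v : V) : G'.edist (f u) (f v) ≤ G.edist u v := by
  by_cases huv : G.Reachable u v
  · obtain ⟨p, hp⟩ := huv.exists_walk_length_eq_edist
    rw [← hp, ← p.length_map f]
    exact SimpleGraph.edist_le _
  · rw [edist_eq_top_of_not_reachable huv]
    exact le_top

theorem exists_ne_zero_ne_sum_of_even_length {K : Type*} [Ring K] [Nontrivial K] (L : List K)
    (hL : ∀ a ∈ L, a ≠ 0) (he : Even L.length) : ∃ a : K, a ≠ 0 ∧ a ≠ L.sum := by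
  by_contra! h
  have h1 : L.sum = 1 := (h 1 one_ne_zero).symm
  have htwo : (2 : K) = 0 := by
    by_contra h2
    have := h 2 h2
    rw [h1, ← one_add_one_eq_two, add_eq_right] at this
    exact one_ne_zero this
  have hrep : L = List.replicate L.length 1 :=
    List.eq_replicate_iff.mpr ⟨rfl, fun b hb => (h b (hL b hb)).trans h1⟩
  obtain ⟨t, ht⟩ := he
  have : L.sum = 0 := by
    rw [hrep, List.sum_replicate, nsmul_one, ht, Nat.cast_add, ← two_mul, htwo, zero_mul]
  exact one_ne_zero (h1.symm.trans this)

section Semilocal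

variable {R : Type*} [CommRing R]

theorem isUnit_of_forall_mk_ne_zero {x : R}
    (h : ∀ m : MaximalSpectrum R, Ideal.Quotient.mk m.asIdeal x ≠ 0) : IsUnit x := by
  by_contra hx
  obtain ⟨m, hm, hxm⟩ := exists_max_ideal_of_mem_nonunits hx
  exact h ⟨m, hm⟩ (Ideal.Quotient.eq_zero_iff_mem.mpr hxm)

variable [Finite (MaximalSpectrum R)]

theorem exists_isUnit_add_isUnit_eq_sum (L : List R) (hL : ∀ u ∈ L, IsUnit u)
    (he : Even L.length) : ∃ u v : R, IsUnit u ∧ IsUnit v ∧ u + v = L.sum := by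
  have hres (m : MaximalSpectrum R) :
      ∃ a : R ⧸ m.asIdeal, a ≠ 0 ∧ a ≠ Ideal.Quotient.mk _ L.sum := by
    rw [map_list_sum]
    refine exists_ne_zero_ne_sum_of_even_length _ ?_ (by simpa using he)
    simp only [List.mem_map]
    rintro _ ⟨u, hu, rfl⟩
    exact ((hL u hu).map _).ne_zero
  choose a ha0 haL using hres
  obtain ⟨u, hu⟩ := Ideal.pi_quotient_surjective (fun _ _ => MaximalSpectrum.isCoprime_of_ne) a
  refine ⟨u, L.sum - u, isUnit_of_forall_mk_ne_zero fun m => ?_,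
    isUnit_of_forall_mk_ne_zero fun m => ?_, add_sub_cancel _ _⟩
  · rw [hu]; exact ha0 m
  · rw [map_sub, hu, sub_ne_zero]; exact (haL m).symm

theorem exists_list_isUnit_length_le_three_sum_eq (L : List R) (hL : ∀ u ∈ L, IsUnit u) :
    ∃ M : List R, M.length ≤ 3 ∧ (∀ u ∈ M, IsUnit u) ∧ M.sum = L.sum := by
  rcases Nat.even_or_odd L.length with he | ho
  · obtain ⟨u, v, hu, hv, huv⟩ := exists_isUnit_add_isUnit_eq_sum L hL he
    exact ⟨[u, v], by simp, by simp [hu, hv], by simpa using huv⟩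
  · obtain ⟨u, v, hu, hv, huv⟩ := exists_isUnit_add_isUnit_eq_sum ((-1) :: L)
      (by simpa [isUnit_one.neg] using hL) (by simpa [Nat.even_add_one] using ho)
    refine ⟨[1, u, v], by simp, by simp [hu, hv], ?_⟩
    simp only [List.sum_cons, List.sum_nil] at huv ⊢
    linear_combination huv

end Semilocal

/-- The unitary Cayley graph `Γ(R, Rˣ)`. -/
def unitaryCayleyGraph (R : Type*) [Ring R] : SimpleGraph R :=
  SimpleGraph.fromRel fun x y => IsUnit (x - y)

section UnitaryCayley

variable {R : Type*} [Ring R]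

theorem isUnit_sub_of_adj {x y : R} (h : (unitaryCayleyGraph R).Adj x y) : IsUnit (x - y) := by
  rcases ((fromRel_adj _ _ _).mp h).2 with h | h
  · exact h
  · rw [← neg_sub]; exact h.neg

theorem unitaryCayleyGraph_edist_add_le_one {u : R} (hu : IsUnit u) (a : R) :
    (unitaryCayleyGraph R).edist a (a + u) ≤ 1 := by
  rw [edist_le_one_iff_adj_or_eq, or_iff_not_imp_right]
  intro h
  simpa [unitaryCayleyGraph, h, neg_sub] using hu.neg

theorem unitaryCayleyGraph_edist_add_sum_le (L : List R) (hL : ∀ u ∈ L, IsUnit u) (a : R) :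
    (unitaryCayleyGraph R).edist a (a + L.sum) ≤ L.length := by
  induction L generalizing a with
  | nil => simp
  | cons u L ih =>
    rw [List.forall_mem_cons] at hL
    calc (unitaryCayleyGraph R).edist a (a + (u :: L).sum)
        ≤ (unitaryCayleyGraph R).edist a (a + u) +
            (unitaryCayleyGraph R).edist (a + u) (a + u + L.sum) := by
          rw [List.sum_cons, ← add_assoc]; exact SimpleGraph.edist_triangle
      _ ≤ 1 + L.length := add_le_add (unitaryCayleyGraph_edist_add_le_one hL.1 a) (ih hL.2 _)
      _ = (u :: L).length := by simp [add_comm]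

theorem exists_list_isUnit_sum_eq_of_reachable {a b : R}
    (h : (unitaryCayleyGraph R).Reachable a b) :
    ∃ L : List R, (∀ u ∈ L, IsUnit u) ∧ L.sum = b - a := by
  obtain ⟨w⟩ := h
  induction w with
  | nil => exact ⟨[], by simp, by simp⟩
  | @cons a b c hadj p ih =>
    obtain ⟨L, hL, hs⟩ := ih
    refine ⟨(b - a) :: L, List.forall_mem_cons.mpr ⟨isUnit_sub_of_adj hadj.symm, hL⟩, ?_⟩
    rw [List.sum_cons, hs]
    abel

end UnitaryCayley

theorem ediam_unitaryCayleyGraph_le_three {R : Type*} [CommRing R] [Finite (MaximalSpectrum R)]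
    (h : (unitaryCayleyGraph R).Connected) : (unitaryCayleyGraph R).ediam ≤ 3 := by
  refine ediam_le_of_edist_le fun a b => ?_
  obtain ⟨L, hL, hsum⟩ := exists_list_isUnit_sum_eq_of_reachable (h.preconnected a b)
  obtain ⟨M, hM3, hM, hMsum⟩ := exists_list_isUnit_length_le_three_sum_eq L hL
  calc (unitaryCayleyGraph R).edist a b = (unitaryCayleyGraph R).edist a (a + M.sum) := by
        rw [hMsum, hsum, add_sub_cancel]
    _ ≤ M.length := unitaryCayleyGraph_edist_add_sum_le M hM a
    _ ≤ 3 := by exact_mod_cast hM3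

section GcdGraph

variable {R : Type*} [CommRing R] {D : Finset (Ideal R)}

@[simps]
def unitaryCayleyGraphHomGcdGraph (hD : ⊥ ∉ D) {g : R} (hg : Ideal.span {g} ∈ D) (a : R) :
    unitaryCayleyGraph R →g gcdGraph R D where
  toFun x := a + x * g
  map_rel' {x y} hxy := by
    have hmem : Ideal.span {(a + x * g) - (a + y * g)} ∈ D := by
      rwa [show (a + x * g) - (a + y * g) = (x - y) * g by ring,
        Ideal.span_singleton_mul_left_unit (isUnit_sub_of_adj hxy)]
    refine (fromRel_adj _ _ _).mpr ⟨fun h => hD ?_, Or.inl hmem⟩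
    rwa [h, sub_self, Ideal.span_singleton_eq_bot.mpr rfl] at hmem

theorem gcdGraph_edist_add_le_of_mem_sum (hD : ∀ I ∈ D, I ≠ ⊥ ∧ I.IsPrincipal)
    {s : Finset (Ideal R)} (hs : s ⊆ D) {x : R} (hx : x ∈ ∑ I ∈ s, I) (a : R) :
    (gcdGraph R D).edist a (a + x) ≤ s.card * (unitaryCayleyGraph R).ediam := by
  classical
  induction s using Finset.induction_on generalizing a x with
  | empty => simp_all
  | @insert I s hI ih =>
    rw [Finset.sum_insert hI, Submodule.add_eq_sup, Submodule.mem_sup] at hx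
    obtain ⟨y, hy, z, hz, rfl⟩ := hx
    obtain ⟨hID, hsD⟩ := Finset.insert_subset_iff.mp hs
    obtain ⟨g, rfl⟩ := (hD _ hID).2.principal
    obtain ⟨r, rfl⟩ := Ideal.mem_span_singleton'.mp hy
    have hy : (gcdGraph R D).edist a (a + r * g) ≤ (unitaryCayleyGraph R).ediam := by
      simpa using (unitaryCayleyGraphHomGcdGraph (fun h => (hD ⊥ h).1 rfl) hID a).edist_le 0 r
        |>.trans edist_le_ediam
    calc (gcdGraph R D).edist a (a + (r * g + z))
        ≤ (gcdGraph R D).edist a (a + r * g) +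
            (gcdGraph R D).edist (a + r * g) (a + r * g + z) := by
          rw [← add_assoc]; exact SimpleGraph.edist_triangle
      _ ≤ (unitaryCayleyGraph R).ediam + s.card * (unitaryCayleyGraph R).ediam :=
          add_le_add hy (ih hsD hz _)
      _ = (insert _ s).card * (unitaryCayleyGraph R).ediam := by
          rw [Finset.card_insert_of_notMem hI]; push_cast; ring

end GcdGraph

/-- If the unitary Cayley graph of a finite commutative ring `R` is connected and the
ideals in `D` sum to `R`, then the diameter of the gcd-graph `G_R(D)` is at most `3|D|`. -/
theorem stmt_6 {R : Type*} [CommRing R] [Finite R]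
    (hG : (SimpleGraph.fromRel (fun x y : R => IsUnit (x - y))).Connected)
    (D : Finset (Ideal R)) (hD : ∀ I ∈ D, I ≠ ⊥ ∧ I.IsPrincipal)
    (hsum : (∑ I ∈ D, I) = ⊤) :
    (gcdGraph R D).diam ≤ 3 * D.card := by
  have hU : (unitaryCayleyGraph R).ediam ≤ 3 := ediam_unitaryCayleyGraph_le_three hG
  refine ENat.toNat_le_of_le_natCast <| ediam_le_of_edist_le fun u v => ?_
  have huv : v - u ∈ ∑ I ∈ D, I := by rw [hsum]; trivial
  calc (gcdGraph R D).edist u v = (gcdGraph R D).edist u (u + (v - u)) := by rw [add_sub_cancel]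
    _ ≤ D.card * (unitaryCayleyGraph R).ediam :=
        gcdGraph_edist_add_le_of_mem_sum hD subset_rfl huv u
    _ ≤ D.card * 3 := by gcongr
    _ = (3 * D.card : ℕ) := by push_cast; ring
end

section
/- Let R be a finite commutative symmetric ℤ/n-algebra (admitting a ℤ/n-linear functional with kernel containing no nonzero ideal) and let f ∈ R[x] be a monic polynomial of positive degree. Then R[x]/(f) is also a finite symmetric ℤ/n-algebra. -/
/-!
Every class in `R[X]/(f)` has a unique representative `g` of degree `< m = deg f`, and the
functional reads off `ψ` of its coefficient of `X ^ (m - 1)`. If `g ≠ 0` has degree `d`, then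
`r X ^ (m - 1 - d) g` is again reduced and its top coefficient is `r` times the leading coefficient
of `g`; so an ideal in the kernel yields the ideal generated by that leading coefficient in the
kernel of `ψ`, which forces `g = 0`.
-/

open Polynomial

section SymmetricFunctional

variable {A R : Type*} [Semiring A] [CommSemiring R] [Module A R]

def IsSymmetricFunctional (ψ : R →ₗ[A] A) : Prop :=
  ∀ I : Ideal R, (∀ a ∈ I, ψ a = 0) → I = ⊥

theorem isSymmetricFunctional_iff {ψ : R →ₗ[A] A} :
    IsSymmetricFunctional ψ ↔ ∀ a : R, a ≠ 0 → ∃ b, ψ (b * a) ≠ 0 := by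
  constructor
  · intro hψ a ha
    by_contra! hkernel
    refine ha (Ideal.span_singleton_eq_bot.mp (hψ _ fun x hx => ?_))
    obtain ⟨b, rfl⟩ := Ideal.mem_span_singleton'.mp hx
    exact hkernel b
  · intro hψ I hI
    refine (Submodule.eq_bot_iff I).mpr fun a ha => ?_
    by_contra ha0
    obtain ⟨b, hb⟩ := hψ a ha0
    exact hb (hI _ (I.mul_mem_left b ha))

end SymmetricFunctional

namespace AdjoinRoot

variable {R : Type*} [CommRing R] {f : R[X]}

noncomputable def topCoeff (hf : f.Monic) : AdjoinRoot f →ₗ[R] R :=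
  (lcoeff R (f.natDegree - 1)).comp (modByMonicHom hf)

theorem topCoeff_mk_C_mul_X_pow_mul [Nontrivial R] (hf : f.Monic) {g : R[X]} (hg : g ≠ 0)
    (hgf : g.degree < f.degree) (r : R) :
    topCoeff hf (mk f (C r * X ^ (f.natDegree - 1 - g.natDegree) * g)) = r * g.leadingCoeff := by
  set m := f.natDegree
  set k := m - 1 - g.natDegree
  have hdm : g.natDegree < m := natDegree_lt_natDegree hg hgf
  have hreduced : (C r * X ^ k * g).degree < f.degree := by
    refine degree_lt_degree (natDegree_mul_le.trans_lt ?_)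
    have := natDegree_C_mul_X_pow_le r k
    omega
  rw [topCoeff, LinearMap.comp_apply, modByMonicHom_mk,
    (modByMonic_eq_self_iff hf).mpr hreduced, lcoeff_apply,
    mul_assoc, coeff_C_mul, coeff_X_pow_mul', if_pos (by omega),
    show m - 1 - k = g.natDegree by omega]
  rfl

theorem isSymmetricFunctional_comp_topCoeff {A : Type*} [CommSemiring A] [Algebra A R]
    {ψ : R →ₗ[A] A} (hψ : IsSymmetricFunctional ψ) (hf : f.Monic) :
    IsSymmetricFunctional (ψ.comp ((topCoeff hf).restrictScalars A)) := by
  rw [isSymmetricFunctional_iff] at hψ ⊢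
  intro a ha
  obtain ⟨p, rfl⟩ := mk_surjective a
  set g := p %ₘ f
  have hpg : mk f p = mk f g := (mk_leftInverse hf (mk f p)).symm
  have hg : g ≠ 0 := fun h => ha (by rw [hpg, h, map_zero])
  have : Nontrivial R := nontrivial_iff.mp (nontrivial_of_ne g 0 hg)
  obtain ⟨r, hr⟩ := hψ g.leadingCoeff (leadingCoeff_ne_zero.mpr hg)
  refine ⟨mk f (C r * X ^ (f.natDegree - 1 - g.natDegree)), ?_⟩
  rwa [hpg, ← map_mul, LinearMap.comp_apply, LinearMap.restrictScalars_apply,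
    topCoeff_mk_C_mul_X_pow_mul hf hg (degree_modByMonic_lt p hf)]

end AdjoinRoot

theorem stmt_13_general {n : ℕ} {R : Type*} [CommRing R] [Finite R] [Algebra (ZMod n) R]
    (ψ : R →ₗ[ZMod n] ZMod n)
    (hψ : ∀ I : Ideal R, (∀ a ∈ I, ψ a = 0) → I = ⊥)
    (f : Polynomial R) (hf : f.Monic) :
    Finite (Polynomial R ⧸ Ideal.span ({f} : Set (Polynomial R))) ∧
      ∃ ψ' : (Polynomial R ⧸ Ideal.span ({f} : Set (Polynomial R))) →ₗ[ZMod n] ZMod n,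
        ∀ I : Ideal (Polynomial R ⧸ Ideal.span ({f} : Set (Polynomial R))),
          (∀ a ∈ I, ψ' a = 0) → I = ⊥ := by
  have := hf.finite_quotient
  exact ⟨Module.finite_of_finite R, _, AdjoinRoot.isSymmetricFunctional_comp_topCoeff hψ hf⟩

/-- If `R` is a finite symmetric `ℤ/n`-algebra and `f ∈ R[x]` is monic of positive degree,
then `R[x]/(f)` is a finite symmetric `ℤ/n`-algebra. -/
theorem stmt_13 {n : ℕ} {R : Type*} [CommRing R] [Finite R] [Algebra (ZMod n) R]
    (ψ : R →ₗ[ZMod n] ZMod n)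
    (hψ : ∀ I : Ideal R, (∀ a ∈ I, ψ a = 0) → I = ⊥)
    (f : Polynomial R) (hf : f.Monic) (hdeg : 0 < f.natDegree) :
    Finite (Polynomial R ⧸ Ideal.span ({f} : Set (Polynomial R))) ∧
      ∃ ψ' : (Polynomial R ⧸ Ideal.span ({f} : Set (Polynomial R))) →ₗ[ZMod n] ZMod n,
        ∀ I : Ideal (Polynomial R ⧸ Ideal.span ({f} : Set (Polynomial R))),
          (∀ a ∈ I, ψ' a = 0) → I = ⊥ :=
  stmt_13_general ψ hψ f hf
end

section
/- Every finite commutative ring is a quotient of a finite commutative symmetric algebra: for every finite commutative ring T of characteristic n, there exists a finite symmetric ℤ/n-algebra R and a surjective ring homomorphism R → T. -/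
/-!
The trivial extension `T ⋉ Hom(T, ℤ/n)`, with multiplication `(a, f) (b, g) = (a b, a g + b f)`,
carries the functional `ψ (a, f) = f 1`. If `ψ` kills an ideal `I` and `(a, f) ∈ I`, then
multiplying by `(b, 0)` gives `f b = 0` for all `b`, and multiplying by `(0, g)` gives `g a = 0`
for all `g`. Since `ℤ/n` is the `n`-torsion of the injective cogenerator `ℚ/ℤ`, the functionals
`T → ℤ/n` separate points, so `a = 0`. Projecting to the first factor maps the extension onto `T`.
-/

open TrivSqZeroExt

namespace ZMod

noncomputable def toRatCircle (n : ℕ) : ZMod n →+ AddCircle (1 : ℚ) :=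
  ZMod.lift n ⟨CharacterModule.int.divByNat n, CharacterModule.int.divByNat_self n⟩

variable {n : ℕ}

lemma toRatCircle_intCast (z : ℤ) :
    toRatCircle n z = ((z / n : ℚ) : AddCircle (1 : ℚ)) := by
  rw [toRatCircle, ZMod.lift_coe]
  show LinearMap.toSpanSingleton ℤ _ _ z = _
  rw [LinearMap.toSpanSingleton_apply, ← QuotientAddGroup.mk_zsmul, zsmul_eq_mul, div_eq_mul_inv]

variable [NeZero n]

lemma toRatCircle_injective : Function.Injective (toRatCircle n) := by
  refine (injective_iff_map_eq_zero _).mpr fun k hk => ?_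
  obtain ⟨z, rfl⟩ := ZMod.intCast_surjective k
  rw [toRatCircle_intCast, AddCircle.coe_eq_zero_iff] at hk
  obtain ⟨m, hm⟩ := hk
  rw [zsmul_eq_mul, mul_one, eq_div_iff (NeZero.ne _)] at hm
  rw [ZMod.intCast_zmod_eq_zero_iff_dvd]
  exact ⟨m, by rw [mul_comm]; exact_mod_cast hm.symm⟩

lemma mem_range_toRatCircle {x : AddCircle (1 : ℚ)} (hx : n • x = 0) :
    x ∈ (toRatCircle n).range := by
  obtain ⟨q, rfl⟩ := QuotientAddGroup.mk_surjective x
  rw [← QuotientAddGroup.mk_nsmul, AddCircle.coe_eq_zero_iff] at hx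
  obtain ⟨m, hm⟩ := hx
  rw [zsmul_eq_mul, mul_one, nsmul_eq_mul] at hm
  refine ⟨m, ?_⟩
  rw [toRatCircle_intCast, hm, mul_div_cancel_left₀ _ (Nat.cast_ne_zero.mpr (NeZero.ne n))]

theorem exists_dual_ne_zero {M : Type*} [AddCommGroup M] [Module (ZMod n) M] {x : M}
    (hx : x ≠ 0) : ∃ f : Module.Dual (ZMod n) M, f x ≠ 0 := by
  obtain ⟨c, hc⟩ := CharacterModule.exists_character_apply_ne_zero_of_ne_zero hx
  have hc_range (y : M) : c y ∈ (toRatCircle n).range :=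
    mem_range_toRatCircle <| by rw [← map_nsmul, ZModModule.char_nsmul_eq_zero, map_zero]
  let e := (AddMonoidHom.ofInjective (f := toRatCircle n) toRatCircle_injective).symm
  let F := e.toAddMonoidHom.comp ((c : M →+ AddCircle (1 : ℚ)).codRestrict _ hc_range)
  exact ⟨F.toZModLinearMap n, fun hF => hc <| congrArg Subtype.val (e.map_eq_zero_iff.mp hF)⟩

end ZMod

/- Not global instances: for `A = R` they would clash with the `R`-module structure of
`Module.Dual R R` acting on the codomain. -/
abbrev Module.Dual.moduleOfCommRing (R A : Type*) [CommRing R] [CommRing A] [Algebra R A] :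
    Module A (Module.Dual R A) :=
  Module.compHom (R := Aᵈᵐᵃ) _ (RingEquiv.toOpposite A).toRingHom

attribute [local instance] Module.Dual.moduleOfCommRing

abbrev Module.Dual.moduleOpOfCommRing (R A : Type*) [CommRing R] [CommRing A] [Algebra R A] :
    Module Aᵐᵒᵖ (Module.Dual R A) :=
  Module.compHom _ ((RingHom.id A).fromOpposite mul_comm)

attribute [local instance] Module.Dual.moduleOpOfCommRing

lemma Module.Dual.isCentralScalar_of_commRing (R A : Type*) [CommRing R] [CommRing A]
    [Algebra R A] : IsCentralScalar A (Module.Dual R A) :=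
  ⟨fun _ _ => rfl⟩

attribute [local instance] Module.Dual.isCentralScalar_of_commRing

@[simp] lemma Module.Dual.smul_apply_eq_apply_mul {R A : Type*} [CommRing R] [CommRing A]
    [Algebra R A] (a : A) (f : Module.Dual R A) (x : A) : (a • f) x = f (a * x) :=
  rfl

namespace TrivSqZeroExt

variable (R A : Type*) [CommRing R] [CommRing A] [Algebra R A]

def sndEvalOne : TrivSqZeroExt A (Module.Dual R A) →ₗ[R] R :=
  Module.Dual.eval R A 1 ∘ₗ LinearMap.snd R A (Module.Dual R A)

lemma sndEvalOne_apply (x : TrivSqZeroExt A (Module.Dual R A)) :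
    sndEvalOne R A x = x.snd 1 :=
  rfl

variable {R A}

theorem eq_bot_of_forall_sndEvalOne_eq_zero
    (hA : ∀ a : A, a ≠ 0 → ∃ f : Module.Dual R A, f a ≠ 0)
    {I : Ideal (TrivSqZeroExt A (Module.Dual R A))} (hI : ∀ x ∈ I, sndEvalOne R A x = 0) :
    I = ⊥ := by
  refine (Submodule.eq_bot_iff I).mpr fun x hx => ext ?_ ?_
  · by_contra h
    obtain ⟨f, hf⟩ := hA _ h
    exact hf (by simpa [sndEvalOne_apply] using hI _ (I.mul_mem_left (inr f) hx))
  · ext b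
    simpa [sndEvalOne_apply] using hI _ (I.mul_mem_left (inl b) hx)

end TrivSqZeroExt

/-- Every finite commutative ring of characteristic `n` is a quotient of a finite
symmetric `ℤ/n`-algebra. -/
theorem stmt_14 (T : Type) [CommRing T] [Finite T] (n : ℕ) [CharP T n] :
    ∃ (R : Type) (_ : CommRing R) (_ : Finite R) (_ : Algebra (ZMod n) R),
      (∃ ψ : R →ₗ[ZMod n] ZMod n, ∀ I : Ideal R, (∀ a ∈ I, ψ a = 0) → I = ⊥) ∧
      ∃ Φ : R →+* T, Function.Surjective Φ := by
  have : NeZero n := ⟨CharP.char_ne_zero_of_finite T n⟩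
  let : Algebra (ZMod n) T := ZMod.algebra T n
  have : Finite (Module.Dual (ZMod n) T) := .of_injective _ DFunLike.coe_injective
  refine ⟨TrivSqZeroExt T (Module.Dual (ZMod n) T), inferInstance,
    inferInstanceAs (Finite (T × _)), inferInstance, ⟨sndEvalOne (ZMod n) T, fun I hI => ?_⟩,
    (fstHom (ZMod n) T _).toRingHom, fun t => ⟨inl t, fst_inl (Module.Dual (ZMod n) T) t⟩⟩
  exact eq_bot_of_forall_sndEvalOne_eq_zero (fun _ => ZMod.exists_dual_ne_zero) hI
end

section
/- Let R be a finite commutative local ring of characteristic dividing n, with maximal ideal 𝔪, and let ψ : R → ℤ/n be a ℤ/n-linear functional whose kernel contains no nonzero ideal. Then Σ_{a ∈ R×} ζ_n^{ψ(a)} equals 0 if 𝔪 ≠ 0 (R not a field) and equals −1 if R is a field, where ζ_n is a primitive n-th root of unity in ℂ. -/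
/-!
Composing `ψ` with the character `k ↦ ζ ^ k` of `ℤ/n` gives an additive character of `R`. By
non-degeneracy it is nontrivial on every nonzero ideal, so its sum over an ideal `I` is `0`
unless `I = ⊥`, when it is `1`. The units of a local ring are the complement of `𝔪`, hence the
sum over `Rˣ` is the sum over `R` (which is `0`) minus the sum over `𝔪`.
-/

open AddChar IsLocalRing

theorem AddMonoidHom.eq_zero_of_finite {G M : Type*} [AddCommGroup G] [Finite G]
    [AddCommGroup M] [IsAddTorsionFree M] (f : G →+ M) : f = 0 := by
  ext x
  by_contra hx
  exact not_isOfFinAddOrder_of_isAddTorsionFree hx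
    (f.isOfFinAddOrder (isOfFinAddOrder_of_finite x))

theorem IsLocalRing.sum_units_add_sum_maximalIdeal {R M : Type*} [CommRing R] [IsLocalRing R]
    [Fintype R] [Fintype Rˣ] [Fintype (maximalIdeal R)] [AddCommMonoid M] (f : R → M) :
    ∑ u : Rˣ, f u + ∑ x : maximalIdeal R, f x = ∑ x, f x := by
  classical
  rw [← Fintype.sum_subtype_add_sum_subtype (· ∈ maximalIdeal R) f,
    add_comm (∑ u : Rˣ, f u)]
  refine congrArg₂ (· + ·) ?_ ?_
  · convert rfl
  · refine Fintype.sum_bijective (fun u => ⟨u, fun h => h u.isUnit⟩) ⟨?_, ?_⟩ _ _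
      fun _ => rfl
    · exact fun u v h => Units.ext (congrArg Subtype.val h)
    · exact fun ⟨x, hx⟩ => ⟨(not_not.mp hx).unit, rfl⟩

section NondegenerateFunctional

variable {n : ℕ} {R : Type*} [CommRing R] [Algebra (ZMod n) R] {ψ : R →ₗ[ZMod n] ZMod n}

theorem neZero_of_forall_ideal_ker_eq_bot [Finite R] [Nontrivial R]
    (hψ : ∀ I : Ideal R, (∀ a ∈ I, ψ a = 0) → I = ⊥) : NeZero n := by
  refine ⟨fun hn => ?_⟩
  subst hn
  have hψ_zero : ψ.toAddMonoidHom = 0 := ψ.toAddMonoidHom.eq_zero_of_finite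
  exact top_ne_bot (hψ ⊤ fun a _ => DFunLike.congr_fun hψ_zero a)

theorem sum_ideal_pow_val_eq_ite [NeZero n] {ζ : ℂ} (hζ : IsPrimitiveRoot ζ n)
    (hψ : ∀ I : Ideal R, (∀ a ∈ I, ψ a = 0) → I = ⊥) (I : Ideal R) [Fintype I] :
    ∑ x : I, ζ ^ (ψ x).val = if I = ⊥ then 1 else 0 := by
  split_ifs with hI
  · subst hI
    rw [Fintype.sum_unique, Subsingleton.elim default 0]
    simp
  · obtain ⟨a, haI, hψa⟩ : ∃ a ∈ I, ψ a ≠ 0 := by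
      by_contra! h
      exact hI (hψ I h)
    let e := (zmodChar n hζ.pow_eq_one).compAddMonoidHom
      (ψ.toAddMonoidHom.comp I.subtype.toAddMonoidHom)
    have he : e ≠ 1 := ne_one_iff.mpr ⟨⟨a, haI⟩,
      ((zmodChar_primitive_of_primitive_root n hζ).zmod_char_eq_one_iff n _).not.mpr hψa⟩
    exact sum_eq_zero_of_ne_one he

end NondegenerateFunctional

/-- Let `R` be a finite local commutative symmetric `ℤ/n`-algebra with non-degenerate
functional `ψ`, and `ζ` a primitive `n`-th root of unity in `ℂ`. Then
`Σ_{a ∈ Rˣ} ζ^{ψ(a)}` is `0` if `R` is not a field and `-1` if `R` is a field. -/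
theorem stmt_15 {n : ℕ} {R : Type*} [CommRing R] [Finite R] [IsLocalRing R]
    [Algebra (ZMod n) R] [Fintype Rˣ]
    (ψ : R →ₗ[ZMod n] ZMod n)
    (hψ : ∀ I : Ideal R, (∀ a ∈ I, ψ a = 0) → I = ⊥)
    (ζ : ℂ) (hζ : IsPrimitiveRoot ζ n) :
    (¬ IsField R → (∑ a : Rˣ, ζ ^ (ψ (a : R)).val) = 0) ∧
      (IsField R → (∑ a : Rˣ, ζ ^ (ψ (a : R)).val) = -1) := by
  classical
  have : Fintype R := .ofFinite R
  have : NeZero n := neZero_of_forall_ideal_ker_eq_bot hψ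
  have h_total : ∑ a : R, ζ ^ (ψ a).val = 0 := calc
    _ = ∑ a : (⊤ : Ideal R), ζ ^ (ψ a).val :=
      (Fintype.sum_equiv (Equiv.subtypeUnivEquiv fun _ => Submodule.mem_top) _ _ fun _ => rfl).symm
    _ = 0 := by rw [sum_ideal_pow_val_eq_ite hζ hψ ⊤, if_neg top_ne_bot]
  have h_split := sum_units_add_sum_maximalIdeal fun a : R => ζ ^ (ψ a).val
  rw [h_total, sum_ideal_pow_val_eq_ite hζ hψ] at h_split
  rw [eq_neg_of_add_eq_zero_left h_split, isField_iff_maximalIdeal_eq]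
  constructor <;> intro h <;> simp [h]
end

section
/- Let R be a finite commutative symmetric ℤ/n-algebra with non-degenerate functional ψ, and define the generalized Ramanujan sum c(g,R) = Σ_{a ∈ R×} ζ_n^{ψ(ga)} for g ∈ R. Then c(g,R) = (|R×| / |(R/Ann_R(g))×|) · c(1, R/Ann_R(g)), where the Ramanujan sum on R/Ann_R(g) is taken with respect to the induced non-degenerate functional ψ_g(ā) = ψ(ag). -/
-- idempotent power in a finite monoid
lemma exists_idem_pow {R : Type*} [CommMonoid R] [Finite R] (a : R) :
    ∃ k : ℕ, a ^ (k + 1) * a ^ (k + 1) = a ^ (k + 1) := by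
  obtain ⟨i, j, hne, hij⟩ := Finite.exists_ne_map_eq_of_infinite (fun m : ℕ => a ^ m)
  wlog hlt : i < j generalizing i j
  · exact this j i hne.symm hij.symm (by omega)
  set d := j - i with hd
  have hdpos : 0 < d := by omega
  have hbase : a ^ i = a ^ (i + d) := by
    rw [hd, show i + (j - i) = j by omega]; exact hij
  have hstep : ∀ s : ℕ, a ^ (i + s) = a ^ (i + s + d) := fun s => by
    rw [show i + s + d = i + d + s by ring, pow_add, pow_add, ← hbase]
  have key : ∀ t s : ℕ, a ^ (i + s) = a ^ (i + s + t * d) := by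
    intro t
    induction t with
    | zero => simp
    | succ t ih =>
      intro s
      rw [ih s, show i + s + (t + 1) * d = i + (s + t * d) + d by ring, ← hstep,
        show i + (s + t * d) = i + s + t * d by ring]
  set m := d * (i + 1) with hmdef
  have hmd : (i + 1) * d = m := by rw [hmdef]; ring
  have him : i < m := by nlinarith
  refine ⟨m - 1, ?_⟩
  rw [show m - 1 + 1 = m by omega, ← pow_add]
  have := key (i + 1) (m - i)
  rw [hmd, show i + (m - i) = m by omega] at this
  exact this.symm

-- units lift along quotients of finite commutative rings
lemma units_map_surj {R : Type*} [CommRing R] [Finite R] (I : Ideal R) :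
    Function.Surjective (Units.map (Ideal.Quotient.mk I).toMonoidHom) := by
  intro u
  obtain ⟨a, ha⟩ := Ideal.Quotient.mk_surjective (u : R ⧸ I)
  obtain ⟨k, he⟩ := exists_idem_pow a
  set m := k + 1 with hm
  set e := a ^ m with hedef
  have h1 : a * a ^ k = e := by rw [hedef, hm, pow_succ]; ring
  have hinv : (a * e + (1 - e)) * (a ^ k * e + (1 - e)) = 1 := by
    linear_combination e * e * h1 + (e + 2 - a - a ^ k) * he
  refine ⟨⟨a * e + (1 - e), a ^ k * e + (1 - e), hinv, by rw [mul_comm]; exact hinv⟩, ?_⟩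
  ext
  show Ideal.Quotient.mk I (a * e + (1 - e)) = (u : R ⧸ I)
  have hmke : Ideal.Quotient.mk I e = 1 := by
    have hu : IsUnit (Ideal.Quotient.mk I e) := by
      rw [hedef, map_pow, ha]; exact (u ^ m).isUnit
    have : Ideal.Quotient.mk I e * Ideal.Quotient.mk I e = Ideal.Quotient.mk I e * 1 := by
      rw [mul_one, ← map_mul, he]
    exact hu.mul_left_cancel this
  rw [map_add, map_mul, hmke, map_sub, hmke, map_one, mul_one, sub_self, add_zero, ha]

/-- The generalized Ramanujan sum `c(g,R) = Σ_{a ∈ Rˣ} ζ^{ψ(ga)}` satisfies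
`c(g,R) = (|Rˣ| / |(R/Ann_R(g))ˣ|) · c(1, R/Ann_R(g))`, where the Ramanujan sum on the
quotient is taken with respect to the induced non-degenerate functional
`ψ_g(ā) = ψ(ag)`. -/
theorem stmt_16 {n : ℕ} {R : Type*} [CommRing R] [Finite R] [Algebra (ZMod n) R]
    [Fintype Rˣ]
    (ψ : R →ₗ[ZMod n] ZMod n)
    (hψ : ∀ I : Ideal R, (∀ a ∈ I, ψ a = 0) → I = ⊥)
    (ζ : ℂ) (hζ : IsPrimitiveRoot ζ n) (g : R)
    [Fintype ((R ⧸ Ideal.torsionOf R R g)ˣ)]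
    (ψg : (R ⧸ Ideal.torsionOf R R g) →ₗ[ZMod n] ZMod n)
    (hψg : ∀ a : R, ψg (Ideal.Quotient.mk (Ideal.torsionOf R R g) a) = ψ (a * g)) :
    (∑ a : Rˣ, ζ ^ (ψ (g * (a : R))).val) =
      ((Fintype.card Rˣ : ℂ) / (Fintype.card ((R ⧸ Ideal.torsionOf R R g)ˣ) : ℂ)) *
        ∑ u : (R ⧸ Ideal.torsionOf R R g)ˣ, ζ ^ (ψg ((u : R ⧸ Ideal.torsionOf R R g))).val := by
  classical
  let I := Ideal.torsionOf R R g
  let φ : Rˣ →* (R ⧸ I)ˣ := Units.map (Ideal.Quotient.mk I).toMonoidHom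
  have hsurj : Function.Surjective φ := units_map_surj I
  have hFφ : ∀ a : Rˣ, ζ ^ (ψ (g * (a : R))).val = ζ ^ (ψg ((φ a : R ⧸ I))).val := by
    intro a
    have h1 : ((φ a : R ⧸ I)) = Ideal.Quotient.mk I (a : R) := rfl
    rw [h1, hψg, mul_comm]
  have hfiber : ∀ u : (R ⧸ I)ˣ, (Finset.univ.filter (fun a : Rˣ => φ a = u)).card
      = Nat.card φ.ker := by
    intro u
    rw [← Fintype.card_subtype, ← Nat.card_eq_fintype_card]
    exact Nat.card_congr ((Equiv.subtypeEquivRight (fun a => by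
      simp [Set.mem_preimage])).trans (MonoidHom.fiberEquivKerOfSurjective hsurj u))
  have hsum : (∑ a : Rˣ, ζ ^ (ψ (g * (a : R))).val)
      = (Nat.card φ.ker : ℂ) * ∑ u : (R ⧸ I)ˣ, ζ ^ (ψg ((u : R ⧸ I))).val := by
    rw [Finset.sum_congr rfl (fun a _ => hFφ a),
      ← Finset.sum_fiberwise_of_maps_to' (fun a _ => Finset.mem_univ (φ a))
        (fun u : (R ⧸ I)ˣ => ζ ^ (ψg ((u : R ⧸ I))).val)]
    rw [Finset.mul_sum]
    refine Finset.sum_congr rfl fun u _ => ?_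
    rw [Finset.sum_const, hfiber u, nsmul_eq_mul]
  have hSne : (Fintype.card ((R ⧸ I)ˣ) : ℂ) ≠ 0 := Nat.cast_ne_zero.mpr Fintype.card_ne_zero
  have hcard : (Fintype.card Rˣ : ℂ)
      = (Fintype.card ((R ⧸ I)ˣ) : ℂ) * (Nat.card φ.ker : ℂ) := by
    have h2 := Subgroup.card_eq_card_quotient_mul_card_subgroup (φ.ker)
    have hq : Nat.card (Rˣ ⧸ φ.ker) = Nat.card ((R ⧸ I)ˣ) :=
      Nat.card_congr (QuotientGroup.quotientKerEquivOfSurjective φ hsurj).toEquiv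
    rw [hq] at h2
    rw [← Nat.card_eq_fintype_card, ← Nat.card_eq_fintype_card, h2]
    push_cast
    ring
  rw [hsum, hcard, mul_comm ((Fintype.card ((R ⧸ I)ˣ) : ℂ)) _, mul_div_assoc,
    div_self hSne, mul_one]
end

section
/- Let R be a finite commutative symmetric ℤ/n-algebra with non-degenerate functional ψ, and let D = {Rx₁,…,Rx_k} be a set of nonzero principal ideals defining the gcd-graph G_R(D) with connection set S = {s : Rs = Rx_i for some i}. Then the eigenvalues of the adjacency matrix of G_R(D) are {λ_g}_{g ∈ R}, where λ_g = Σ_{i=1}^k c(g, R/Ann_R(x_i)) and c(g, R/Ann_R(x_i)) = Σ_{u ∈ (R/Ann_R(x_i))×} ζ_n^{ψ(g û x_i)} for lifts û of u to R×. -/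
open scoped Classical

/-!
The additive character `χ = ζ^{ψ(·)}` of `R` is primitive by non-degeneracy of `ψ`, so the
characters `t ↦ χ(g t)`, `g ∈ R`, are pairwise orthogonal and form an invertible matrix `U`.
Any matrix of the form `A a b = f (a - b)` satisfies `U A = D U` with `D` diagonal,
`D g g = ∑ s, f s χ(g s)`; for the adjacency matrix `f` is the indicator of the connection set `S`.
Finally `S` is the disjoint union of the sets of generators of `R xᵢ`, and `u ↦ û xᵢ` is a
bijection from `(R ⧸ Ann xᵢ)ˣ` onto the generators of `R xᵢ`.
-/

open Polynomial

theorem ne_zero_of_nondegenerate {n : ℕ} {R : Type*} [CommRing R] [Fintype R] [Nontrivial R]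
    [Algebra (ZMod n) R] (ψ : R →ₗ[ZMod n] ZMod n)
    (hψ : ∀ I : Ideal R, (∀ a ∈ I, ψ a = 0) → I = ⊥) : n ≠ 0 := by
  rintro rfl
  have hψ0 : ∀ a, ψ a = 0 := fun a => by
    have h : (Fintype.card R : ZMod 0) * ψ a = 0 := by
      rw [← nsmul_eq_mul, ← map_nsmul, card_nsmul_eq_zero, map_zero]
    exact ((mul_eq_zero (M₀ := ℤ)).mp h).resolve_left (Nat.cast_ne_zero.mpr Fintype.card_ne_zero)
  exact top_ne_bot (hψ ⊤ fun a _ => hψ0 a)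

theorem exists_isPrimitive_addChar_of_nondegenerate {n : ℕ} {R : Type*} [CommRing R] [Fintype R]
    [Algebra (ZMod n) R] (ψ : R →ₗ[ZMod n] ZMod n)
    (hψ : ∀ I : Ideal R, (∀ a ∈ I, ψ a = 0) → I = ⊥) {ζ : ℂ} (hζ : IsPrimitiveRoot ζ n) :
    ∃ χ : AddChar R ℂ, χ.IsPrimitive ∧ ∀ r, χ r = ζ ^ (ψ r).val := by
  rcases subsingleton_or_nontrivial R with hR | hR
  · -- `n` may be `0` here, where `AddChar.zmodChar` is not available
    refine ⟨1, fun a ha => (ha (Subsingleton.elim a 0)).elim, fun r => ?_⟩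
    rw [Subsingleton.elim r 0, ψ.map_zero, ZMod.val_zero, pow_zero, AddChar.one_apply]
  have : NeZero n := ⟨ne_zero_of_nondegenerate ψ hψ⟩
  set ω := AddChar.zmodChar n hζ.pow_eq_one
  refine ⟨ω.compAddMonoidHom ψ.toAddMonoidHom, fun a ha hshift => ha ?_, fun r => rfl⟩
  have hker : ∀ t, ψ (a * t) = 0 := fun t =>
    (AddChar.IsPrimitive.zmod_char_eq_one_iff n
      (AddChar.zmodChar_primitive_of_primitive_root n hζ) _).mp
      (by simpa using DFunLike.congr_fun hshift t)
  rw [← Ideal.span_singleton_eq_bot]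
  refine hψ _ fun b hb => ?_
  obtain ⟨t, rfl⟩ := Ideal.mem_span_singleton.mp hb
  exact hker t

section Circulant

variable {R : Type*} [CommRing R] [Fintype R] {χ : AddChar R ℂ}

theorem AddChar.IsPrimitive.sum_mul_neg_mul (hχ : χ.IsPrimitive) (g h : R) :
    ∑ t, χ (g * t) * χ (-(t * h)) = if g = h then (Fintype.card R : ℂ) else 0 := by
  have hsum := AddChar.sum_mulShift (g - h) hχ
  push_cast [sub_eq_zero] at hsum
  rw [← hsum]
  refine Finset.sum_congr rfl fun t _ => ?_
  rw [← AddChar.map_add_eq_mul]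
  ring_nf

theorem Matrix.charpoly_of_sub (hχ : χ.IsPrimitive) (f : R → ℂ) :
    (Matrix.of fun a b => f (a - b)).charpoly =
      ∏ g, (X - C (∑ s, f s * χ (g * s))) := by
  set U : Matrix R R ℂ := Matrix.of fun g t => χ (g * t)
  set V : Matrix R R ℂ := Matrix.of fun t h => (Fintype.card R : ℂ)⁻¹ * χ (-(t * h))
  set D : Matrix R R ℂ := Matrix.diagonal fun g => ∑ s, f s * χ (g * s)
  have hUV : U * V = 1 := by
    ext g h
    simp only [U, V, Matrix.mul_apply, Matrix.of_apply, mul_left_comm _ (Fintype.card R : ℂ)⁻¹,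
      ← Finset.mul_sum, hχ.sum_mul_neg_mul, Matrix.one_apply]
    split_ifs <;> simp
  have hUA : U * Matrix.of (fun a b => f (a - b)) = D * U := by
    ext g b
    rw [Matrix.diagonal_mul, Matrix.mul_apply, Finset.sum_mul]
    refine Fintype.sum_equiv (Equiv.subRight b) _ _ fun a => ?_
    simp only [U, Matrix.of_apply, Equiv.subRight_apply, mul_assoc, ← AddChar.map_add_eq_mul]
    rw [mul_comm, ← mul_add, sub_add_cancel]
  calc (Matrix.of fun a b => f (a - b)).charpoly
      = (V * (D * U)).charpoly := by rw [← hUA, ← mul_assoc, mul_eq_one_comm.mp hUV, one_mul]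
    _ = (D * (U * V)).charpoly := by rw [Matrix.charpoly_mul_comm, mul_assoc]
    _ = _ := by rw [hUV, mul_one, Matrix.charpoly_diagonal]

end Circulant

theorem SimpleGraph.adjMatrix_fromRel_sub {G α : Type*} [AddGroup G] [Fintype G] [Zero α] [One α]
    {P : G → Prop} [DecidablePred P] [DecidableRel (SimpleGraph.fromRel fun a b : G => P (a - b)).Adj]
    (hP0 : ¬ P 0) (hPneg : ∀ s, P (-s) ↔ P s) :
    (SimpleGraph.fromRel fun a b : G => P (a - b)).adjMatrix α =
      Matrix.of fun a b => if P (a - b) then 1 else 0 := by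
  ext a b
  have hPab : P (b - a) ↔ P (a - b) := by rw [← hPneg, neg_sub]
  have hne : P (a - b) → a ≠ b := by rintro h rfl; exact hP0 (by simpa using h)
  simp only [SimpleGraph.adjMatrix_apply, SimpleGraph.fromRel_adj, Matrix.of_apply, hPab, or_self]
  exact if_congr (and_iff_right_of_imp hne) rfl rfl

theorem Ideal.mk_torsionOf_eq_mk_iff {R : Type*} [CommRing R] (x a b : R) :
    Ideal.Quotient.mk (Ideal.torsionOf R R x) a = Ideal.Quotient.mk _ b ↔ a * x = b * x := by
  rw [Ideal.Quotient.eq, Ideal.mem_torsionOf_iff, smul_eq_mul, sub_mul, sub_eq_zero]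

theorem sum_filter_span_singleton_eq_sum_units {R M : Type*} [CommRing R] [Fintype R]
    [AddCommMonoid M] (x : R) (lift : (R ⧸ Ideal.torsionOf R R x)ˣ → Rˣ)
    (hlift : ∀ u, Ideal.Quotient.mk (Ideal.torsionOf R R x) (lift u : R) = u) (f : R → M) :
    ∑ s with Ideal.span {s} = Ideal.span {x}, f s = ∑ u, f (lift u * x) := by
  symm
  refine Finset.sum_bij (fun u _ => lift u * x)
    (fun u _ => by simpa using Ideal.span_singleton_mul_left_unit (lift u).isUnit x) ?_ ?_
    (fun _ _ => rfl)
  · intro u₁ _ u₂ _ h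
    rw [Units.ext_iff, ← hlift, ← hlift, Ideal.mk_torsionOf_eq_mk_iff]
    exact h
  · intro s hs
    have hspan : Ideal.span {s} = Ideal.span {x} := (Finset.mem_filter.mp hs).2
    obtain ⟨r, hr⟩ := Ideal.mem_span_singleton'.mp (hspan ▸ Ideal.mem_span_singleton_self s)
    obtain ⟨r', hr'⟩ := Ideal.mem_span_singleton'.mp (hspan ▸ Ideal.mem_span_singleton_self x)
    have hunit : Ideal.Quotient.mk (Ideal.torsionOf R R x) r * Ideal.Quotient.mk _ r' = 1 := by
      rw [← map_mul, ← map_one (Ideal.Quotient.mk _), Ideal.mk_torsionOf_eq_mk_iff, one_mul,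
        mul_comm r, mul_assoc, hr, hr']
    refine ⟨Units.mkOfMulEqOne _ _ hunit, Finset.mem_univ _, ?_⟩
    rw [← hr, ← Ideal.mk_torsionOf_eq_mk_iff, hlift]
    rfl

theorem sum_filter_exists_span_eq {R ι M : Type*} [CommRing R] [Fintype R] [Fintype ι]
    [AddCommMonoid M] {x : ι → R} [DecidablePred fun s : R => ∃ i, Ideal.span {s} = Ideal.span {x i}]
    (hinj : Function.Injective fun i => Ideal.span {x i}) (f : R → M) :
    ∑ s with ∃ i, Ideal.span {s} = Ideal.span {x i}, f s =
      ∑ i, ∑ s with Ideal.span {s} = Ideal.span {x i}, f s := by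
  rw [← Finset.sum_biUnion]
  · congr 1
    ext s
    simp
  · intro i _ j _ hij
    simp only [Function.onFun, Finset.disjoint_left, Finset.mem_filter, Finset.mem_univ, true_and]
    exact fun s hi hj => hij (hinj (hi.symm.trans hj))

/-- Spectrum of a gcd-graph over a finite symmetric `ℤ/n`-algebra: the characteristic
polynomial of the adjacency matrix of `G_R(D)`, `D = {Rx₁,…,Rx_k}`, is
`∏_{g ∈ R} (X - λ_g)` where `λ_g = Σ_i c(g, R/Ann_R(x_i))` and
`c(g, R/Ann_R(x_i)) = Σ_{u ∈ (R/Ann_R(x_i))ˣ} ζ^{ψ(g û x_i)}` for lifts `û ∈ Rˣ` of `u`. -/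
theorem stmt_18 {n : ℕ} {R : Type*} [CommRing R] [Fintype R] [Algebra (ZMod n) R]
    (ψ : R →ₗ[ZMod n] ZMod n)
    (hψ : ∀ I : Ideal R, (∀ a ∈ I, ψ a = 0) → I = ⊥)
    (ζ : ℂ) (hζ : IsPrimitiveRoot ζ n)
    (k : ℕ) (x : Fin k → R) (hx : ∀ i, x i ≠ 0)
    (hinj : Function.Injective (fun i => Ideal.span ({x i} : Set R)))
    (lift : ∀ i : Fin k, (R ⧸ Ideal.torsionOf R R (x i))ˣ → Rˣ)
    (hlift : ∀ (i : Fin k) (u : (R ⧸ Ideal.torsionOf R R (x i))ˣ),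
      Ideal.Quotient.mk (Ideal.torsionOf R R (x i)) ((lift i u : Rˣ) : R) =
        ((u : (R ⧸ Ideal.torsionOf R R (x i))ˣ) : R ⧸ Ideal.torsionOf R R (x i))) :
    Matrix.charpoly
        ((SimpleGraph.fromRel
          (fun a b : R => ∃ i, Ideal.span ({a - b} : Set R) = Ideal.span ({x i} : Set R))).adjMatrix ℂ)
      = ∏ g : R, (Polynomial.X - Polynomial.C
          (∑ i : Fin k, ∑ u : (R ⧸ Ideal.torsionOf R R (x i))ˣ,
            ζ ^ (ψ (g * ((lift i u : Rˣ) : R) * x i)).val)) := by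
  obtain ⟨χ, hχ, hχψ⟩ := exists_isPrimitive_addChar_of_nondegenerate ψ hψ hζ
  have hP0 : ¬ ∃ i, Ideal.span {(0 : R)} = Ideal.span {x i} := fun ⟨i, h⟩ =>
    hx i (Ideal.span_singleton_eq_bot.mp (by simpa using h.symm))
  rw [SimpleGraph.adjMatrix_fromRel_sub (P := fun s => ∃ i, Ideal.span {s} = Ideal.span {x i}) hP0
      (by simp [Ideal.span_singleton_neg]),
    Matrix.charpoly_of_sub hχ (fun s => if ∃ i, Ideal.span {s} = Ideal.span {x i} then 1 else 0)]
  refine Finset.prod_congr rfl fun g _ => ?_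
  simp only [boole_mul, ← Finset.sum_filter, sum_filter_exists_span_eq hinj,
    sum_filter_span_singleton_eq_sum_units _ (lift _) (hlift _), hχψ, mul_assoc]
end
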